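/- arXiv:0902.4855 — 4 statements merged into one kernel-verified Lean document; each statement's English description precedes it below -/
import Mathlib

section
/- Let α ≥ 0, β > 0, γ > 0 and δ ≥ 0. Then the present value of a continuously paid life-long annuity to a person at age x ≥ 0 under Gompertz–Makeham mortality equals the expected remaining life-length at age 0 under modified parameters: ā_x(α,β,γ,δ) = e₀(α+δ, β·e^{γx}, γ). -/
open MeasureTheory

/-- Gompertz–Makeham survival function `l(x; α, β, γ) = exp(-αx - (β/γ)(e^{γx} - 1))`. -/
noncomputable def survival (α β γ x : ℝ) : ℝ :=
  Real.exp (-α * x - β / γ * (Real.exp (γ * x) - 1))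

/-- Expected remaining life-length at age 0: `e₀(α,β,γ) = ∫₀^∞ l(t;α,β,γ) dt`. -/
noncomputable def e0 (α β γ : ℝ) : ℝ :=
  ∫ t in Set.Ioi (0 : ℝ), survival α β γ t

/-- Present value of a continuously paid life-long annuity at age `x`:
`ā_x(α,β,γ,δ) = ∫₀^∞ e^{-δt} l(x+t)/l(x) dt`. -/
noncomputable def annuity (α β γ δ x : ℝ) : ℝ :=
  ∫ t in Set.Ioi (0 : ℝ), Real.exp (-δ * t) * (survival α β γ (x + t) / survival α β γ x)

theorem survival_add_div_survival (α β γ x t : ℝ) :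
    survival α β γ (x + t) / survival α β γ x = survival α (β * Real.exp (γ * x)) γ t := by
  rw [survival, survival, survival, ← Real.exp_sub, mul_add γ, Real.exp_add]
  congr 1
  ring

theorem exp_mul_survival (α β γ δ t : ℝ) :
    Real.exp (-δ * t) * survival α β γ t = survival (α + δ) β γ t := by
  rw [survival, survival, ← Real.exp_add]
  congr 1
  ring

theorem annuity_eq_e0_shifted_general (α β γ δ x : ℝ) :
    annuity α β γ δ x = e0 (α + δ) (β * Real.exp (γ * x)) γ := by
  simp only [annuity, e0, survival_add_div_survival, exp_mul_survival]

theorem annuity_eq_e0_shifted (α β γ δ x : ℝ)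
    (hα : 0 ≤ α) (hβ : 0 < β) (hγ : 0 < γ) (hδ : 0 ≤ δ) (hx : 0 ≤ x) :
    annuity α β γ δ x = e0 (α + δ) (β * Real.exp (γ * x)) γ :=
  annuity_eq_e0_shifted_general α β γ δ x
end

section
/- Let β > 0, γ > 0 and 0 < α < γ. Then the expected remaining life-length at age 0 under Gompertz–Makeham mortality satisfies e₀(α,β,γ) = (1/α)·(1 − (β/γ)^{α/γ} · e^{β/γ} · Γ(1 − α/γ) · [1 − G(β/γ; 1 − α/γ, 1)]), where Γ denotes the gamma function and G(·;η,1) the gamma distribution function with shape η and scale 1. -/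
open MeasureTheory

/-- Gamma distribution function with shape `η` and scale 1:
`G(z; η, 1) = (1/Γ(η)) ∫₀^z y^{η-1} e^{-y} dy`. -/
noncomputable def gammaCDF' (z η : ℝ) : ℝ :=
  (1 / Real.Gamma η) * ∫ y in (0:ℝ)..z, y ^ (η - 1) * Real.exp (-y)

/-!
Differentiating gives `-l' = μ l` for the hazard rate `μ(t) = α + β e^{γt}`; since `l(0) = 1` and
`l(t) → 0`, integrating over `(0, ∞)` yields `α e₀ + ∫₀^∞ β e^{γt} l(t) dt = 1`. The substitution
`y = (β/γ) e^{γt}` turns the last integral into `(β/γ)^{α/γ} e^{β/γ} ∫_{β/γ}^∞ y^{-α/γ} e^{-y} dy`,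
an upper incomplete gamma integral, which equals `Γ(1 - α/γ) (1 - G(β/γ; 1 - α/γ, 1))`.
-/

open Set Filter Topology Real

theorem image_mul_exp_mul_Ioi_zero {z γ : ℝ} (hz : 0 < z) (hγ : 0 < γ) :
    (fun t => z * exp (γ * t)) '' Ioi 0 = Ioi z := by
  have : (fun t => z * exp (γ * t)) = (z * ·) ∘ exp ∘ (γ * ·) := rfl
  rw [this, image_comp, image_comp, image_mul_left_Ioi hγ, image_exp_Ioi, image_mul_left_Ioi hz]
  simp

theorem Gamma_mul_one_sub_gammaCDF' {z η : ℝ} (hη : 0 < η) (hz : 0 ≤ z) :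
    Gamma η * (1 - gammaCDF' z η) = ∫ y in Ioi z, y ^ (η - 1) * exp (-y) := by
  have hint : IntegrableOn (fun y => y ^ (η - 1) * exp (-y)) (Ioi 0) := by
    simpa only [mul_comm] using GammaIntegral_convergent hη
  have hsplit :=
    intervalIntegral.integral_interval_add_Ioi hint (hint.mono_set (Ioi_subset_Ioi hz))
  have hΓ : Gamma η = ∫ y in Ioi 0, y ^ (η - 1) * exp (-y) := by
    simpa only [mul_comm] using Gamma_eq_integral hη
  rw [gammaCDF', mul_sub, mul_one, ← mul_assoc, mul_one_div_cancel (Gamma_pos_of_pos hη).ne',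
    one_mul, hΓ, ← hsplit, add_sub_cancel_left]

noncomputable def hazard (α β γ t : ℝ) : ℝ :=
  α + β * exp (γ * t)

section

variable {α β γ : ℝ}

theorem survival_zero : survival α β γ 0 = 1 := by
  simp [survival]

theorem survival_pos (t : ℝ) : 0 < survival α β γ t :=
  exp_pos _

theorem hasDerivAt_survival (hγ : γ ≠ 0) (t : ℝ) :
    HasDerivAt (survival α β γ) (-(hazard α β γ t * survival α β γ t)) t := by
  have hexp := (((hasDerivAt_id t).const_mul γ).exp.sub_const 1).const_mul (β / γ)
  refine HasDerivAt.congr_deriv (f := survival α β γ)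
    (((hasDerivAt_id t).const_mul (-α)).sub hexp).exp ?_
  simp only [hazard, survival, id, Pi.sub_apply]
  field_simp
  ring

theorem hazard_nonneg (hα : 0 ≤ α) (hβ : 0 ≤ β) (t : ℝ) : 0 ≤ hazard α β γ t := by
  unfold hazard
  positivity

theorem survival_le_exp_neg_mul (hβ : 0 ≤ β) (hγ : 0 ≤ γ) {t : ℝ} (ht : 0 ≤ t) :
    survival α β γ t ≤ exp (-α * t) := by
  have : 0 ≤ β / γ * (exp (γ * t) - 1) :=
    mul_nonneg (div_nonneg hβ hγ) (sub_nonneg.2 (one_le_exp (mul_nonneg hγ ht)))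
  exact exp_le_exp.2 (by linarith)

theorem tendsto_survival_atTop (hα : 0 < α) (hβ : 0 ≤ β) (hγ : 0 ≤ γ) :
    Tendsto (survival α β γ) atTop (𝓝 0) := by
  have hexp : Tendsto (fun t => exp (-α * t)) atTop (𝓝 0) :=
    tendsto_exp_atBot.comp (tendsto_id.const_mul_atTop_of_neg (neg_neg_of_pos hα))
  refine tendsto_of_tendsto_of_tendsto_of_le_of_le' tendsto_const_nhds hexp
    (Eventually.of_forall fun t => (survival_pos t).le) ?_
  filter_upwards [eventually_ge_atTop 0] with t ht
  exact survival_le_exp_neg_mul hβ hγ ht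

theorem integrableOn_survival_Ioi (hα : 0 < α) (hβ : 0 ≤ β) (hγ : 0 ≤ γ) :
    IntegrableOn (survival α β γ) (Ioi 0) := by
  have hcont : Continuous (survival α β γ) := by unfold survival; fun_prop
  refine (exp_neg_integrableOn_Ioi 0 hα).mono' hcont.aestronglyMeasurable ?_
  filter_upwards [ae_restrict_mem measurableSet_Ioi] with t ht
  rw [norm_of_nonneg (survival_pos t).le]
  exact survival_le_exp_neg_mul hβ hγ (le_of_lt ht)

theorem integrableOn_hazard_mul_survival (hα : 0 < α) (hβ : 0 ≤ β) (hγ : 0 < γ) :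
    IntegrableOn (fun t => hazard α β γ t * survival α β γ t) (Ioi 0) := by
  simpa using (integrableOn_Ioi_deriv_of_nonpos' (fun t _ => hasDerivAt_survival hγ.ne' t)
    (fun t _ => neg_nonpos.2 (mul_nonneg (hazard_nonneg hα.le hβ t) (survival_pos t).le))
    (tendsto_survival_atTop hα hβ hγ.le)).neg

theorem integral_hazard_mul_survival (hα : 0 < α) (hβ : 0 ≤ β) (hγ : 0 < γ) :
    ∫ t in Ioi 0, hazard α β γ t * survival α β γ t = 1 := by
  have := integral_Ioi_of_hasDerivAt_of_nonpos' (a := 0) (fun t _ => hasDerivAt_survival hγ.ne' t)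
    (fun t _ => neg_nonpos.2 (mul_nonneg (hazard_nonneg hα.le hβ t) (survival_pos t).le))
    (tendsto_survival_atTop hα hβ hγ.le)
  rw [integral_neg, survival_zero] at this
  linarith

theorem mul_e0_add_integral_eq_one (hα : 0 < α) (hβ : 0 ≤ β) (hγ : 0 < γ) :
    α * e0 α β γ + ∫ t in Ioi 0, β * exp (γ * t) * survival α β γ t = 1 := by
  have hS := (integrableOn_survival_Ioi hα hβ hγ.le).const_mul α
  have hB : IntegrableOn (fun t => β * exp (γ * t) * survival α β γ t) (Ioi 0) := by
    refine ((integrableOn_hazard_mul_survival hα hβ hγ).sub hS).congr_fun (fun t _ => ?_)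
      measurableSet_Ioi
    simp only [hazard, Pi.sub_apply]
    ring
  rw [e0, ← integral_const_mul, ← integral_add hS hB, ← integral_hazard_mul_survival hα hβ hγ]
  refine setIntegral_congr_fun measurableSet_Ioi fun t _ => ?_
  simp only [hazard]
  ring

theorem survival_eq_rpow_mul_exp (hβ : 0 < β) (hγ : 0 < γ) (t : ℝ) :
    survival α β γ t = (β / γ) ^ (α / γ) * exp (β / γ) *
      ((β / γ * exp (γ * t)) ^ (-(α / γ)) * exp (-(β / γ * exp (γ * t)))) := by
  have hz : 0 < β / γ := div_pos hβ hγ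
  rw [mul_rpow hz.le (exp_pos _).le, ← exp_mul, rpow_neg hz.le]
  have : (β / γ) ^ (α / γ) ≠ 0 := (rpow_pos_of_pos hz _).ne'
  rw [survival]
  field_simp
  rw [← exp_add, ← exp_add]
  congr 1
  field_simp
  ring

theorem integral_Ioi_mul_exp_mul_survival (hβ : 0 < β) (hγ : 0 < γ) :
    ∫ t in Ioi 0, β * exp (γ * t) * survival α β γ t =
      (β / γ) ^ (α / γ) * exp (β / γ) * ∫ y in Ioi (β / γ), y ^ (-(α / γ)) * exp (-y) := by
  have hz : 0 < β / γ := div_pos hβ hγ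
  have hderiv : ∀ t ∈ Ioi (0 : ℝ),
      HasDerivWithinAt (fun t => β / γ * exp (γ * t)) (β * exp (γ * t)) (Ioi 0) t := by
    intro t _
    refine (HasDerivAt.congr_deriv (f := fun t => β / γ * exp (γ * t))
      (((hasDerivAt_id t).const_mul γ).exp.const_mul (β / γ)) ?_).hasDerivWithinAt
    simp only [id]
    field_simp
  have hinj : InjOn (fun t => β / γ * exp (γ * t)) (Ioi 0) :=
    ((exp_strictMono.comp (strictMono_mul_left_of_pos hγ)).const_mul hz).injective.injOn
  rw [← image_mul_exp_mul_Ioi_zero hz hγ,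
    integral_image_eq_integral_abs_deriv_smul measurableSet_Ioi hderiv hinj, ← integral_const_mul]
  refine setIntegral_congr_fun measurableSet_Ioi fun t _ => ?_
  rw [survival_eq_rpow_mul_exp hβ hγ, abs_of_pos (by positivity), smul_eq_mul]
  ring

end

theorem e0_eq_gamma_expression (α β γ : ℝ)
    (hβ : 0 < β) (hγ : 0 < γ) (hα : 0 < α) (hαγ : α < γ) :
    e0 α β γ =
      (1 / α) * (1 - (β / γ) ^ (α / γ) * Real.exp (β / γ) * Real.Gamma (1 - α / γ) *
        (1 - gammaCDF' (β / γ) (1 - α / γ))) := by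
  have hη : 0 < 1 - α / γ := sub_pos.2 ((div_lt_one hγ).2 hαγ)
  have htail := Gamma_mul_one_sub_gammaCDF' hη (div_pos hβ hγ).le
  rw [sub_sub_cancel_left] at htail
  have hbalance := mul_e0_add_integral_eq_one hα hβ.le hγ
  rw [integral_Ioi_mul_exp_mul_survival hβ hγ, ← htail] at hbalance
  rw [one_div_mul_eq_div, eq_div_iff hα.ne']
  linear_combination hbalance
end

section
/- Let α ≥ 0, β > 0, γ > 0, δ ≥ 0 and x ≥ 0. Then the commutation function N under Gompertz–Makeham mortality satisfies N(x) = D(x) · e₀(α+δ, β·e^{γx}, γ), where moreover D(x) = l(x; α+δ, β, γ). -/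
open MeasureTheory

/-- Commutation function `D(x) = l(x;α,β,γ) e^{-δx}`. -/
noncomputable def commD (α β γ δ x : ℝ) : ℝ :=
  survival α β γ x * Real.exp (-δ * x)

/-- Commutation function `N(x) = ∫_x^∞ D(y) dy`. -/
noncomputable def commN (α β γ δ x : ℝ) : ℝ :=
  ∫ y in Set.Ioi x, commD α β γ δ y

theorem commN_eq_commD_mul_e0 (α β γ δ x : ℝ)
    (hα : 0 ≤ α) (hβ : 0 < β) (hγ : 0 < γ) (hδ : 0 ≤ δ) (hx : 0 ≤ x) :
    commN α β γ δ x = commD α β γ δ x * e0 (α + δ) (β * Real.exp (γ * x)) γ ∧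
      commD α β γ δ x = survival (α + δ) β γ x := by
  have hD : ∀ y : ℝ, commD α β γ δ y = survival (α + δ) β γ y := by
    intro y
    simp only [commD, survival, ← Real.exp_add]
    rw [Real.exp_eq_exp]
    ring
  refine ⟨?_, hD x⟩
  have key : ∀ t : ℝ, commD α β γ δ (t + x)
      = commD α β γ δ x * survival (α + δ) (β * Real.exp (γ * x)) γ t := by
    intro t
    simp only [commD, survival, ← Real.exp_add]
    rw [Real.exp_eq_exp]
    have : γ * (t + x) = γ * t + γ * x := by ring
    rw [this, Real.exp_add]
    ring
  calc commN α β γ δ x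
      = ∫ y, (Set.Ioi x).indicator (commD α β γ δ) y :=
        (integral_indicator measurableSet_Ioi).symm
    _ = ∫ y, (Set.Ioi x).indicator (commD α β γ δ) (y + x) :=
        (integral_add_right_eq_self _ x).symm
    _ = ∫ t, (Set.Ioi (0 : ℝ)).indicator (fun t => commD α β γ δ (t + x)) t := by
        congr 1; ext t
        by_cases h : 0 < t
        · simp [Set.indicator, Set.mem_Ioi, h, lt_add_iff_pos_left]
        · simp [Set.indicator, Set.mem_Ioi, h, lt_add_iff_pos_left]
    _ = ∫ t in Set.Ioi (0 : ℝ), commD α β γ δ (t + x) :=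
        integral_indicator measurableSet_Ioi
    _ = ∫ t in Set.Ioi (0 : ℝ),
          commD α β γ δ x * survival (α + δ) (β * Real.exp (γ * x)) γ t := by
        simp_rw [key]
    _ = commD α β γ δ x * e0 (α + δ) (β * Real.exp (γ * x)) γ := by
        rw [e0, integral_const_mul]
end

section
/- Let α ≥ 0, β > 0 and γ > 0. Then the expected remaining life-length at age 0 under Gompertz–Makeham mortality can be expressed via an upper incomplete gamma function with (possibly negative) shape parameter: e₀(α,β,γ) = (β/γ)^{α/γ} · (e^{β/γ}/γ) · Γ(−α/γ, β/γ). -/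
open MeasureTheory

/-- Upper incomplete gamma function `Γ(η, z) = ∫_z^∞ y^{η-1} e^{-y} dy`. -/
noncomputable def upperGamma (η z : ℝ) : ℝ :=
  ∫ y in Set.Ioi z, y ^ (η - 1) * Real.exp (-y)

/-! Substitute `y = (β/γ) e^{γt}` in `Γ(-α/γ, β/γ)`: then `dy = γ y dt` and
`y^{-α/γ} = (β/γ)^{-α/γ} e^{-αt}`, so the integrand becomes a constant multiple of `l(t; α, β, γ)`.
The one-dimensional change of variables holds for Bochner integrals with no integrability
hypothesis, since a function is integrable on the image iff its transform is. -/

open Real Set Filter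

theorem integral_Ioi_eq_integral_Ioi_zero_comp_mul_exp {E : Type*} [NormedAddCommGroup E]
    [NormedSpace ℝ E] {c γ : ℝ} (hc : 0 < c) (hγ : 0 < γ) (g : ℝ → E) :
    ∫ y in Ioi c, g y = ∫ t in Ioi 0, (c * γ * exp (γ * t)) • g (c * exp (γ * t)) := by
  set f : ℝ → ℝ := fun t ↦ c * exp (γ * t)
  have hderiv (t : ℝ) : HasDerivAt f (c * γ * exp (γ * t)) t := by
    rw [show c * γ * exp (γ * t) = c * (exp (γ * t) * (γ * 1)) by ring]
    exact ((hasDerivAt_id' t).const_mul γ).exp.const_mul c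
  have hmono : StrictMono f := fun a b hab ↦ by simp only [f]; gcongr
  have htop : Tendsto f atTop atTop :=
    (tendsto_exp_atTop.comp (tendsto_id.const_mul_atTop hγ)).const_mul_atTop hc
  have himage : f '' Ioi 0 = Ioi c := by
    simpa [f] using (continuous_iff_continuousAt.2 fun t ↦ (hderiv t).continuousAt).continuousOn
      |>.image_Ioi_of_strictMonoOn (a := 0) (hmono.strictMonoOn _) htop
  rw [← himage, integral_image_eq_integral_abs_deriv_smul measurableSet_Ioi
    (fun t _ ↦ (hderiv t).hasDerivWithinAt) hmono.injective.injOn]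
  congr 1 with t
  rw [abs_of_pos (by positivity)]

theorem survival_eq_mul_deriv_mul_rpow_mul_exp {α β γ : ℝ} (hβ : 0 < β) (hγ : 0 < γ) (t : ℝ) :
    survival α β γ t = (β / γ) ^ (α / γ) * (exp (β / γ) / γ) *
      (β / γ * γ * exp (γ * t) *
        ((β / γ * exp (γ * t)) ^ (-(α / γ) - 1) * exp (-(β / γ * exp (γ * t))))) := by
  have hc : 0 < β / γ := div_pos hβ hγ
  have hy : 0 < β / γ * exp (γ * t) := by positivity
  rw [rpow_sub_one hy.ne', mul_rpow hc.le (exp_pos _).le, ← exp_mul, rpow_neg hc.le]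
  have hexponent : γ * t * -(α / γ) = -α * t := by field_simp
  rw [hexponent, survival]
  field_simp
  rw [← exp_add, ← exp_add]
  congr 1
  field_simp
  ring

theorem e0_eq_upperGamma_expression_general (α β γ : ℝ)
    (hβ : 0 < β) (hγ : 0 < γ) :
    e0 α β γ =
      (β / γ) ^ (α / γ) * (Real.exp (β / γ) / γ) * upperGamma (-(α / γ)) (β / γ) := by
  rw [e0, upperGamma, integral_Ioi_eq_integral_Ioi_zero_comp_mul_exp (div_pos hβ hγ) hγ,
    ← integral_const_mul]
  simp only [survival_eq_mul_deriv_mul_rpow_mul_exp hβ hγ, smul_eq_mul]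

theorem e0_eq_upperGamma_expression (α β γ : ℝ)
    (hα : 0 ≤ α) (hβ : 0 < β) (hγ : 0 < γ) :
    e0 α β γ =
      (β / γ) ^ (α / γ) * (Real.exp (β / γ) / γ) * upperGamma (-(α / γ)) (β / γ) :=
  e0_eq_upperGamma_expression_general α β γ hβ hγ
end
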